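/- As α → ∞, φ''(2) = -2α²e^{-α} + O(α²e^{-3α}): there exist constants C, α₀ > 0 such that |φ''(2) + 2α²e^{-α}| ≤ Cα²e^{-3α} for all α ≥ α₀. -/

import Mathlib

/-- Equilibrium distance parameter of the Morse potential. -/
noncomputable def morseR0 (α : ℝ) : ℝ :=
  1 + (1 / α) * Real.log ((1 + 2 * Real.exp (-α)) / (1 + 2 * Real.exp (-2 * α)))

/-- The (shifted) Morse potential with stiffness α and shift φ₀. -/
noncomputable def morse (α φ₀ : ℝ) (r : ℝ) : ℝ :=
  Real.exp (-2 * α * (r - morseR0 α)) - 2 * Real.exp (-α * (r - morseR0 α)) - φ₀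

/-!
With `u = e^{-α(r - r₀)}` the potential is `u² - 2u - φ₀`, so `φ''(r) = 2α²(2u² - u)`.
The choice of `r₀` makes `u(2) = x(1 + 2x)/(1 + 2x²)` with `x = e^{-α}`, and for this `u`
one has `2u² - u + x = x³(10 + 4x + 4x²)/(1 + 2x²)²`, which is at most `18x³` when `x ≤ 1`.
-/

open Real

lemma hasDerivAt_exp_mul_sub (a c r : ℝ) :
    HasDerivAt (fun y => exp (a * (y - c))) (a * exp (a * (r - c))) r := by
  simpa [mul_comm] using (((hasDerivAt_id r).sub_const c).const_mul a).exp

lemma exp_two_mul_eq_sq (t : ℝ) : exp (2 * t) = exp t ^ 2 := by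
  rw [two_mul, exp_add, sq]

lemma deriv_morse (α φ₀ : ℝ) :
    deriv (morse α φ₀) = fun r =>
      2 * α * exp (-α * (r - morseR0 α)) - 2 * α * exp (-2 * α * (r - morseR0 α)) := by
  funext r
  have h := ((hasDerivAt_exp_mul_sub (-2 * α) (morseR0 α) r).sub
    ((hasDerivAt_exp_mul_sub (-α) (morseR0 α) r).const_mul 2)).sub_const φ₀
  exact h.deriv.trans (by ring)

lemma deriv_deriv_morse (α φ₀ r : ℝ) :
    deriv (deriv (morse α φ₀)) r =
      2 * α ^ 2 * (2 * exp (-α * (r - morseR0 α)) ^ 2 - exp (-α * (r - morseR0 α))) := by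
  have h := ((hasDerivAt_exp_mul_sub (-α) (morseR0 α) r).const_mul (2 * α)).sub
    ((hasDerivAt_exp_mul_sub (-2 * α) (morseR0 α) r).const_mul (2 * α))
  rw [deriv_morse]
  refine h.deriv.trans ?_
  rw [show -2 * α * (r - morseR0 α) = 2 * (-α * (r - morseR0 α)) by ring, exp_two_mul_eq_sq]
  ring

lemma exp_neg_mul_two_sub_morseR0 {α : ℝ} (hα : α ≠ 0) :
    exp (-α * (2 - morseR0 α)) = exp (-α) * (1 + 2 * exp (-α)) / (1 + 2 * exp (-α) ^ 2) := by
  have hratio : 0 < (1 + 2 * exp (-α)) / (1 + 2 * exp (-α) ^ 2) := by positivity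
  have harg : -α * (2 - morseR0 α) =
      -α + log ((1 + 2 * exp (-α)) / (1 + 2 * exp (-α) ^ 2)) := by
    rw [morseR0, show -2 * α = 2 * -α by ring, exp_two_mul_eq_sq]
    field_simp
    ring
  rw [harg, exp_add, exp_log hratio, mul_div_assoc]

lemma abs_two_mul_sq_sub_add_le {x : ℝ} (hx₀ : 0 ≤ x) (hx₁ : x ≤ 1) :
    |2 * (x * (1 + 2 * x) / (1 + 2 * x ^ 2)) ^ 2 - x * (1 + 2 * x) / (1 + 2 * x ^ 2) + x|
      ≤ 18 * x ^ 3 := by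
  have hB : 1 ≤ 1 + 2 * x ^ 2 := by nlinarith
  have hB₀ : (0 : ℝ) < 1 + 2 * x ^ 2 := by linarith
  have hident : 2 * (x * (1 + 2 * x) / (1 + 2 * x ^ 2)) ^ 2 - x * (1 + 2 * x) / (1 + 2 * x ^ 2) + x
      = x ^ 3 * (10 + 4 * x + 4 * x ^ 2) / (1 + 2 * x ^ 2) ^ 2 := by
    field_simp
    ring
  rw [hident, abs_of_nonneg (by positivity)]
  calc x ^ 3 * (10 + 4 * x + 4 * x ^ 2) / (1 + 2 * x ^ 2) ^ 2
      ≤ x ^ 3 * (10 + 4 * x + 4 * x ^ 2) := div_le_self (by positivity) (by nlinarith)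
    _ ≤ x ^ 3 * 18 := by gcongr; nlinarith
    _ = 18 * x ^ 3 := mul_comm _ _

/-- φ''(2) = -2α²e^{-α} + O(α²e^{-3α}) as α → ∞. -/
theorem stmt_4 (φ₀ : ℝ) :
    ∃ C α₀ : ℝ, 0 < C ∧ 0 < α₀ ∧ ∀ α : ℝ, α₀ ≤ α →
      |deriv (deriv (morse α φ₀)) 2 + 2 * α ^ 2 * Real.exp (-α)|
        ≤ C * α ^ 2 * Real.exp (-3 * α) := by
  refine ⟨36, 1, by norm_num, one_pos, fun α hα => ?_⟩
  have hexp3 : exp (-3 * α) = exp (-α) ^ 3 := by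
    rw [← exp_nat_mul]; ring_nf
  rw [deriv_deriv_morse, exp_neg_mul_two_sub_morseR0 (by linarith : α ≠ 0), hexp3]
  set x := exp (-α)
  have hx₀ : 0 ≤ x := (exp_pos _).le
  have hx₁ : x ≤ 1 := exp_le_one_iff.mpr (by linarith)
  set u := x * (1 + 2 * x) / (1 + 2 * x ^ 2)
  calc |2 * α ^ 2 * (2 * u ^ 2 - u) + 2 * α ^ 2 * x|
      = 2 * α ^ 2 * |2 * u ^ 2 - u + x| := by
        rw [← mul_add, abs_mul, abs_of_nonneg (by positivity)]
    _ ≤ 2 * α ^ 2 * (18 * x ^ 3) := by gcongr; exact abs_two_mul_sq_sub_add_le hx₀ hx₁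
    _ = 36 * α ^ 2 * x ^ 3 := by ring
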